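/- arXiv:1902.02378 — 4 statements merged into one kernel-verified Lean document; each statement's English description precedes it below -/
import Mathlib

section
/- Every proper retract of a free group of rank n has rank strictly smaller than n. -/
/-- `R` is a retract of the ambient group: there is an endomorphism with image `R`
restricting to the identity on `R` (equivalently, an idempotent endomorphism with image `R`). -/
def IsRetract {G : Type*} [Group G] (R : Subgroup G) : Prop :=
  ∃ r : G →* G, r.range = R ∧ ∀ x ∈ R, r x = x

/-- The subgroup `H` is free of rank `m`. -/
def HasFreeRank {G : Type*} [Group G] (H : Subgroup G) (m : ℕ) : Prop :=
  ∃ φ : FreeGroup (Fin m) →* G, Function.Injective φ ∧ φ.range = H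

/-!
A retraction `ρ : F → R` presents the retract `R` as a quotient of `F = F(Fin n)`. By
Nielsen–Schreier `R` is free, and abelianizing the surjection `F → R` shows that `R` has rank at
most `n`. If the rank were `n`, composing `ρ` with an isomorphism `R ≃* F` would give a surjective
endomorphism of `F`. Free groups are residually finite (a nontrivial reduced word acts
nontrivially on the vertices of the path it spells), hence Hopfian by Mal'cev's argument; so this
endomorphism, and with it `ρ`, is injective, which forces `R = F`.
-/

universe u

open Function Cardinal

theorem Equiv.Perm.exists_apply_eq_of_rel {X : Type*} [Finite X] (r : X → X → Prop)
    (hfun : ∀ {x y y'}, r x y → r x y' → y = y') (hinj : ∀ {x x' y}, r x y → r x' y → x = x') :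
    ∃ σ : Perm X, ∀ {x y}, r x y → σ x = y := by
  classical
  choose f hf using fun x : {x // ∃ y, r x y} => x.2
  have hf_inj : Injective f := fun x x' h => Subtype.ext (hinj (hf x) (h ▸ hf x'))
  refine ⟨(Equiv.ofInjective f hf_inj).extendSubtype, fun {x y} hxy => ?_⟩
  rw [Equiv.extendSubtype_apply_of_mem _ _ ⟨y, hxy⟩]
  exact hfun (hf _) hxy

theorem List.prod_map_apply_eq_of_forall_apply_succ {β X : Type*} (g : β → Equiv.Perm X)
    (x : ℕ → X) : ∀ L : List β, (∀ i (hi : i < L.length), g L[i] (x (i + 1)) = x i) →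
      (L.map g).prod (x L.length) = x 0
  | [], _ => rfl
  | b :: L, h => by
    have ih : (L.map g).prod (x (L.length + 1)) = x 1 :=
      List.prod_map_apply_eq_of_forall_apply_succ g (fun i => x (i + 1)) L
        fun i hi => h (i + 1) (by simpa using hi)
    rw [List.map_cons, List.prod_cons, Equiv.Perm.mul_apply, List.length_cons, ih]
    exact h 0 (by simp)

namespace FreeGroup

variable {α : Type*}

theorem IsReduced.eq_of_getElem?_succ {L : List (α × Bool)} (hL : IsReduced L) {i : ℕ} {a : α}
    {b b' : Bool} (h : L[i]? = some (a, b)) (h' : L[i + 1]? = some (a, b')) : b = b' := by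
  obtain ⟨hi, h'⟩ := List.getElem?_eq_some_iff.mp h'
  rw [List.getElem?_eq_getElem (by omega), Option.some_inj] at h
  simpa [h, h'] using hL.getElem i hi

/-- A word `L` labels the path `0 — 1 — ⋯ — |L|`: the letter `L[i] = (a, b)` is an `a`-edge
between `i` and `i + 1`, oriented from `i + 1` to `i` if `b` and from `i` to `i + 1` otherwise. -/
def PathEdge (L : List (α × Bool)) (a : α) (j k : ℕ) : Prop :=
  (L[k]? = some (a, true) ∧ j = k + 1) ∨ (L[j]? = some (a, false) ∧ k = j + 1)

variable {L : List (α × Bool)} {a : α} {j j' k k' : ℕ}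

theorem IsReduced.pathEdge_functional (hL : IsReduced L) (h : PathEdge L a j k)
    (h' : PathEdge L a j k') : k = k' := by
  rcases h with ⟨hk, rfl⟩ | ⟨hj, rfl⟩ <;> rcases h' with ⟨hk', hjk'⟩ | ⟨hj', rfl⟩
  · omega
  · cases hL.eq_of_getElem?_succ hk hj'
  · cases hL.eq_of_getElem?_succ hk' (hjk' ▸ hj)
  · rfl

theorem IsReduced.pathEdge_injective (hL : IsReduced L) (h : PathEdge L a j k)
    (h' : PathEdge L a j' k) : j = j' := by
  rcases h with ⟨hk, rfl⟩ | ⟨hj, rfl⟩ <;> rcases h' with ⟨hk', rfl⟩ | ⟨hj', hkj'⟩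
  · rfl
  · cases hL.eq_of_getElem?_succ hj' (hkj' ▸ hk)
  · cases hL.eq_of_getElem?_succ hj hk'
  · omega

theorem IsReduced.exists_lift_mk_ne_one (hL : IsReduced L) (hne : L ≠ []) :
    ∃ σ : α → Equiv.Perm (Fin (L.length + 1)), lift σ (mk L) ≠ 1 := by
  choose σ hσ using fun a => Equiv.Perm.exists_apply_eq_of_rel
    (fun j k : Fin (L.length + 1) => PathEdge L a j k)
    (fun h h' => Fin.ext (hL.pathEdge_functional h h'))
    (fun h h' => Fin.ext (hL.pathEdge_injective h h'))
  refine ⟨σ, fun h1 => hne ?_⟩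
  let x : ℕ → Fin (L.length + 1) := Fin.ofNat _
  have hx : ∀ i ≤ L.length, (x i : ℕ) = i := fun i hi => Nat.mod_eq_of_lt (by omega)
  let g : α × Bool → Equiv.Perm (Fin (L.length + 1)) := fun p => cond p.2 (σ p.1) (σ p.1)⁻¹
  have hstep : ∀ i (hi : i < L.length), g L[i] (x (i + 1)) = x i := by
    intro i hi
    have hLi : L[i]? = some L[i] := List.getElem?_eq_getElem hi
    generalize L[i] = p at hLi ⊢
    obtain ⟨a, _ | _⟩ := p
    · show (σ a)⁻¹ _ = _
      rw [Equiv.Perm.inv_eq_iff_eq]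
      exact (hσ a (Or.inr ⟨by rwa [hx i hi.le], by rw [hx (i + 1) hi, hx i hi.le]⟩)).symm
    · exact hσ a (Or.inl ⟨by rwa [hx i hi.le], by rw [hx (i + 1) hi, hx i hi.le]⟩)
  have hlast := List.prod_map_apply_eq_of_forall_apply_succ g x L hstep
  rw [← lift_mk, h1, Equiv.Perm.one_apply] at hlast
  have hlen := congrArg Fin.val hlast
  rw [hx _ le_rfl, hx 0 (Nat.zero_le _)] at hlen
  exact List.eq_nil_of_length_eq_zero hlen

theorem exists_hom_perm_apply_ne_one [DecidableEq α] {w : FreeGroup α} (hw : w ≠ 1) :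
    ∃ (m : ℕ) (φ : FreeGroup α →* Equiv.Perm (Fin m)), φ w ≠ 1 := by
  obtain ⟨σ, hσ⟩ := isReduced_toWord.exists_lift_mk_ne_one (toWord_eq_nil_iff.not.mpr hw)
  exact ⟨_, lift σ, by rwa [mk_toWord] at hσ⟩

instance : Group.ResiduallyFinite (FreeGroup α) := by
  classical
  refine Group.residuallyFinite_of_forall_exists_finite_monoidHom fun w hw => ?_
  obtain ⟨m, φ, hφ⟩ := exists_hom_perm_apply_ne_one hw
  exact ⟨_, _, inferInstance, φ, hφ⟩

end FreeGroup

instance MonoidHom.finite_of_fg {G Q : Type*} [Group G] [Group.FG G] [Monoid Q] [Finite Q] :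
    Finite (G →* Q) := by
  obtain ⟨S, hS⟩ := Group.fg_def.mp ‹_›
  exact Finite.of_injective (fun f : G →* Q => fun s : S => f s)
    fun f g h => MonoidHom.eq_of_eqOn_dense hS fun s hs => congrFun h ⟨s, hs⟩

theorem Group.ResiduallyFinite.injective_of_surjective {G : Type*} [Group G] [Group.FG G]
    [Group.ResiduallyFinite G] {f : G →* G} (hf : Surjective f) : Injective f := by
  refine (injective_iff_map_eq_one f).mpr fun g hg => by_contra fun hg1 => ?_
  -- Precomposing with `f` is injective on the finite set `G →* G ⧸ H`, hence also surjective.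
  obtain ⟨H, hgH⟩ := exists_finiteIndexNormalSubgroup_notMem g hg1
  obtain ⟨ψ, hψ⟩ := Finite.surjective_of_injective
    (fun _ _ h => (MonoidHom.cancel_right hf).mp h : Injective fun ψ : G →* G ⧸ H.toSubgroup =>
      ψ.comp f) (QuotientGroup.mk' H.toSubgroup)
  refine hgH ((QuotientGroup.eq_one_iff g).mp ?_)
  rw [← QuotientGroup.mk'_apply, ← hψ, MonoidHom.comp_apply, hg, map_one]

theorem FreeGroup.mk_le_mk_of_surjective {α β : Type u} (f : FreeGroup α →* FreeGroup β)
    (hf : Surjective f) : #β ≤ #α := by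
  have hab : Surjective (Abelianization.map f) := by
    intro y
    induction y using QuotientGroup.induction_on with | H y => ?_
    obtain ⟨x, rfl⟩ := hf y
    exact ⟨Abelianization.of x, Abelianization.map_of f x⟩
  let f' : FreeAbelianGroup α →+ FreeAbelianGroup β := (Abelianization.map f).toAdditive
  simpa [← (FreeAbelianGroup.basis α).mk_eq_rank'', ← (FreeAbelianGroup.basis β).mk_eq_rank'']
    using LinearMap.rank_le_of_surjective f'.toIntLinearMap hab

theorem IsRetract.exists_retraction {G : Type*} [Group G] {R : Subgroup G} (hR : IsRetract R) :
    ∃ ρ : G →* R, ∀ x : R, ρ x = x :=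
  let ⟨r, hrange, hfix⟩ := hR
  ⟨r.codRestrict R fun x => hrange ▸ ⟨x, rfl⟩, fun x => Subtype.ext (hfix x x.2)⟩

theorem IsRetract.eq_top_of_mulEquiv {G : Type*} [Group G] [Group.FG G] [Group.ResiduallyFinite G]
    {R : Subgroup G} (hR : IsRetract R) (e : R ≃* G) : R = ⊤ := by
  obtain ⟨ρ, hρ⟩ := hR.exists_retraction
  have hρ_inj : Injective ρ := fun x y h =>
    Group.ResiduallyFinite.injective_of_surjective (f := e.toMonoidHom.comp ρ)
      (e.surjective.comp fun x => ⟨x, hρ x⟩) (congrArg e h)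
  exact eq_top_iff.mpr fun x _ => hρ_inj (hρ (ρ x)) ▸ (ρ x).2

theorem HasFreeRank.of_mulEquiv {G : Type*} [Group G] {H : Subgroup G} {m : ℕ}
    (e : FreeGroup (Fin m) ≃* H) : HasFreeRank H m :=
  ⟨H.subtype.comp e.toMonoidHom, H.subtype_injective.comp e.injective, by
    rw [MonoidHom.range_comp, MonoidHom.range_eq_top.mpr e.surjective, ← MonoidHom.range_eq_map,
      Subgroup.range_subtype]⟩

theorem rank_lt_of_proper_retract_general {n : ℕ}
    (R : Subgroup (FreeGroup (Fin n))) (hR : IsRetract R) (hne : R ≠ ⊤) :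
    ∃ k < n, HasFreeRank R k := by
  obtain ⟨ρ, hρ⟩ := hR.exists_retraction
  let e := IsFreeGroup.toFreeGroup R
  have hrank : #(IsFreeGroup.Generators R) ≤ n := by
    simpa using FreeGroup.mk_le_mk_of_surjective (e.toMonoidHom.comp ρ)
      (e.surjective.comp fun x => ⟨x, hρ x⟩)
  have : Finite (IsFreeGroup.Generators R) :=
    lt_aleph0_iff_finite.mp (hrank.trans_lt natCast_lt_aleph0)
  set k := Nat.card (IsFreeGroup.Generators R)
  let e' : FreeGroup (Fin k) ≃* R :=
    (FreeGroup.freeGroupCongr (Finite.equivFin _).symm).trans e.symm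
  have hk_ne : k ≠ n := fun h =>
    hne (hR.eq_top_of_mulEquiv (e'.symm.trans (FreeGroup.freeGroupCongr (finCongr h))))
  have hk_le : k ≤ n := by rwa [← Nat.cast_card, Nat.cast_le] at hrank
  exact ⟨k, lt_of_le_of_ne hk_le hk_ne, .of_mulEquiv e'⟩

theorem rank_lt_of_proper_retract {n : ℕ} (hn : 2 ≤ n)
    (R : Subgroup (FreeGroup (Fin n))) (hR : IsRetract R) (hne : R ≠ ⊤) :
    ∃ k < n, HasFreeRank R k :=
  rank_lt_of_proper_retract_general R hR hne
end

section
/- Every ascending chain of subgroups of a free group of finite rank, all of whose members have rank bounded by a fixed constant, is eventually stationary. -/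
open Subgroup

lemma aux_not_gen {m k : ℕ} (hkm : k < m) (s : Fin k → FreeGroup (Fin m)) :
    Subgroup.closure (Set.range s) ≠ ⊤ := by
  classical
  intro htop
  let π : FreeGroup (Fin m) →* Multiplicative (Fin m → ZMod 2) :=
    FreeGroup.lift (fun i => Multiplicative.ofAdd (Pi.single i 1))
  let T : Set (Fin m → ZMod 2) := Set.range (fun j => Multiplicative.toAdd (π (s j)))
  have hspan : Submodule.span (ZMod 2) T = ⊤ := by
    have hsingle : ∀ i : Fin m, Pi.single i (1 : ZMod 2) ∈ Submodule.span (ZMod 2) T := by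
      intro i
      let W : Subgroup (Multiplicative (Fin m → ZMod 2)) :=
        AddSubgroup.toSubgroup (Submodule.span (ZMod 2) T).toAddSubgroup
      have h1 : π (FreeGroup.of i) ∈ (Subgroup.closure (Set.range s)).map π :=
        Subgroup.mem_map_of_mem π (htop ▸ Subgroup.mem_top _)
      rw [MonoidHom.map_closure] at h1
      have h2 : Subgroup.closure (π '' Set.range s) ≤ W := by
        rw [Subgroup.closure_le]
        rintro x ⟨y, ⟨j, rfl⟩, rfl⟩
        exact show Multiplicative.toAdd (π (s j)) ∈ Submodule.span (ZMod 2) T from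
          Submodule.subset_span ⟨j, rfl⟩
      have h4 : Multiplicative.toAdd (π (FreeGroup.of i)) ∈ Submodule.span (ZMod 2) T :=
        h2 h1
      simpa [π, FreeGroup.lift_apply_of] using h4
    rw [eq_top_iff, ← (Pi.basisFun (ZMod 2) (Fin m)).span_eq, Submodule.span_le]
    rintro x ⟨i, rfl⟩
    simpa using hsingle i
  have hle : Module.rank (ZMod 2) (Fin m → ZMod 2) ≤ k := by
    calc Module.rank (ZMod 2) (Fin m → ZMod 2)
        = Module.rank (ZMod 2) (⊤ : Submodule (ZMod 2) (Fin m → ZMod 2)) :=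
          (rank_top _ _).symm
      _ = Module.rank (ZMod 2) (Submodule.span (ZMod 2) T) := by rw [hspan]
      _ ≤ Cardinal.mk T := rank_span_le T
      _ ≤ Cardinal.mk (Fin k) := Cardinal.mk_range_le
      _ = k := by simp
  rw [rank_fin_fun] at hle
  exact absurd (Nat.cast_le.mp hle) (Nat.not_le.mpr hkm)

lemma aux_gen_top (G : Type*) [Group G] [IsFreeGroup G] :
    Subgroup.closure (Set.range (IsFreeGroup.of : IsFreeGroup.Generators G → G)) = ⊤ := by
  have h : Set.range (IsFreeGroup.of : IsFreeGroup.Generators G → G)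
      = (IsFreeGroup.mulEquiv G).toMonoidHom '' Set.range FreeGroup.of := by
    rw [← Set.range_comp]; rfl
  rw [h, ← MonoidHom.map_closure, FreeGroup.closure_range_of]
  exact Subgroup.map_top_of_surjective _ (IsFreeGroup.mulEquiv G).surjective

theorem ascending_chain_bounded_rank_stationary {n c : ℕ}
    (H : ℕ → Subgroup (FreeGroup (Fin n))) (hmono : Monotone H)
    (hrk : ∀ i, ∃ k ≤ c, HasFreeRank (H i) k) :
    ∃ N, ∀ j, N ≤ j → H j = H N := by
  classical
  set L : Subgroup (FreeGroup (Fin n)) := ⨆ i, H i with hLdef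
  have hmem : ∀ x : FreeGroup (Fin n), x ∈ L ↔ ∃ i, x ∈ H i := fun x =>
    Subgroup.mem_iSup_of_directed hmono.directed_le
  have hHle : ∀ i, H i ≤ L := fun i => le_iSup H i
  by_cases hfin : Finite (IsFreeGroup.Generators ↥L)
  · -- finitely generated case
    haveI := Fintype.ofFinite (IsFreeGroup.Generators ↥L)
    choose idx hidx using fun a : IsFreeGroup.Generators ↥L =>
      (hmem _).1 (IsFreeGroup.of a : ↥L).2
    set N := Finset.univ.sup idx with hN
    have hgen : ∀ a : IsFreeGroup.Generators ↥L, ((IsFreeGroup.of a : ↥L) : FreeGroup (Fin n)) ∈ H N :=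
      fun a => hmono (Finset.le_sup (Finset.mem_univ a)) (hidx a)
    have hLle : L ≤ H N := by
      intro x hx
      have hx' : (⟨x, hx⟩ : ↥L) ∈ Subgroup.closure
          (Set.range (IsFreeGroup.of : IsFreeGroup.Generators ↥L → ↥L)) := by
        rw [aux_gen_top]; trivial
      have key : ∀ (y : ↥L), y ∈ Subgroup.closure
          (Set.range (IsFreeGroup.of : IsFreeGroup.Generators ↥L → ↥L)) →
          (y : FreeGroup (Fin n)) ∈ H N := by
        intro y hy
        refine Subgroup.closure_induction
          (p := fun (z : ↥L) _ => (z : FreeGroup (Fin n)) ∈ H N) ?_ ?_ ?_ ?_ hy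
        · rintro z ⟨a, rfl⟩ ; exact hgen a
        · exact (H N).one_mem
        · intro z w _ _ hz hw; exact (H N).mul_mem hz hw
        · intro z _ hz; exact (H N).inv_mem hz
      exact key ⟨x, hx⟩ hx'
    exact ⟨N, fun j hj => le_antisymm ((hHle j).trans hLle) (hmono hj)⟩
  · -- infinite rank case: contradiction
    haveI : Infinite (IsFreeGroup.Generators ↥L) := by
      exact not_finite_iff_infinite.mp hfin
    exfalso
    let f : Fin (c + 1) ↪ IsFreeGroup.Generators ↥L :=
      (Fin.valEmbedding.trans (Infinite.natEmbedding _))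
    let g : Fin (c + 1) → ↥L := fun j => IsFreeGroup.of (f j)
    obtain ⟨i, hi⟩ : ∃ i, ∀ j, ((g j : ↥L) : FreeGroup (Fin n)) ∈ H i := by
      choose idx hidx using fun j => (hmem _).1 (g j).2
      exact ⟨Finset.univ.sup idx,
        fun j => hmono (Finset.le_sup (Finset.mem_univ j)) (hidx j)⟩
    obtain ⟨k, hk, hfr⟩ := hrk i
    obtain ⟨φ, hφinj, hφr⟩ := hfr
    -- the retraction onto the free factor generated by the chosen basis elements
    let g' : IsFreeGroup.Generators ↥L → FreeGroup (Fin (c + 1)) := fun x =>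
      if h : ∃ j, f j = x then FreeGroup.of h.choose else 1
    let σ : ↥L →* FreeGroup (Fin (c + 1)) := IsFreeGroup.lift g'
    have hσg : ∀ j, σ (g j) = FreeGroup.of j := by
      intro j
      have h1 : σ (g j) = g' (f j) := IsFreeGroup.lift_of _ _
      have hex : ∃ j', f j' = f j := ⟨j, rfl⟩
      rw [h1]
      simp only [g', dif_pos hex]
      exact congrArg _ (f.injective hex.choose_spec)
    have hφL : ∀ w, φ w ∈ L := fun w => hHle i (hφr ▸ ⟨w, rfl⟩)
    let φ' : FreeGroup (Fin k) →* ↥L := φ.codRestrict L hφL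
    let τ : FreeGroup (Fin k) →* FreeGroup (Fin (c + 1)) := σ.comp φ'
    have hτ : ∀ j : Fin (c + 1), ∃ w, τ w = FreeGroup.of j := by
      intro j
      obtain ⟨w, hw⟩ : ((g j : ↥L) : FreeGroup (Fin n)) ∈ φ.range := hφr ▸ hi j
      refine ⟨w, ?_⟩
      have h2 : φ' w = g j := Subtype.ext hw
      show σ (φ' w) = FreeGroup.of j
      rw [h2, hσg j]
    have htop : Subgroup.closure
        (Set.range (fun a : Fin k => τ (FreeGroup.of a))) = ⊤ := by
      have h1 : Subgroup.closure (Set.range (fun a : Fin k => τ (FreeGroup.of a)))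
          = τ.range := by
        rw [MonoidHom.range_eq_map, ← FreeGroup.closure_range_of (Fin k),
          MonoidHom.map_closure]
        congr 1
        rw [← Set.range_comp]
        rfl
      rw [h1, eq_top_iff, ← FreeGroup.closure_range_of (Fin (c + 1)), Subgroup.closure_le]
      rintro x ⟨j, rfl⟩
      exact hτ j
    exact aux_not_gen (Nat.lt_succ_of_le hk) _ htop
end

section
/- Let H be a finite index subgroup of a finitely generated free group F_n and let θ_H : F_n → H^{ab} be the transfer map. Then θ_H sends visible elements of F_n to visible elements of H^{ab}. -/
/-- An element of a (finitely generated free or free abelian) group is *visible* if some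
homomorphism to `ℤ` sends it to `1`; equivalently, its image in the abelianization is part
of a basis (has coprime coordinates). -/
def IsVisibleElement {G : Type*} [Group G] (g : G) : Prop :=
  ∃ f : G →* Multiplicative ℤ, f g = Multiplicative.ofAdd 1

open MulAction

attribute [local instance] arrowAction arrowMulDistribMulAction

namespace FreeGroup

variable {α Q A : Type*} [MulAction (FreeGroup α) Q] [CommGroup A]

open scoped Classical in
noncomputable def cocycleLift (q₀ : Q) (f : FreeGroup α →* A) :
    FreeGroup α →* (Q → A) ⋊[MulDistribMulAction.toMulAut (FreeGroup α) (Q → A)] FreeGroup α :=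
  FreeGroup.lift fun i => ⟨Pi.mulSingle q₀ (f (of i)), of i⟩

variable (q₀ : Q) (f : FreeGroup α →* A)

@[simp]
lemma right_cocycleLift (g : FreeGroup α) : (cocycleLift q₀ f g).right = g := by
  change (SemidirectProduct.rightHom.comp (cocycleLift q₀ f)) g = MonoidHom.id _ g
  congr 1
  ext i
  simp [cocycleLift]

noncomputable def cocycle (g : FreeGroup α) : Q → A := (cocycleLift q₀ f g).left

lemma cocycle_mul (g h : FreeGroup α) :
    cocycle q₀ f (g * h) = cocycle q₀ f g * g • cocycle q₀ f h := by
  simp [cocycle]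

lemma cocycle_mul_apply (g h : FreeGroup α) (q : Q) :
    cocycle q₀ f (g * h) q = cocycle q₀ f g q * cocycle q₀ f h (g⁻¹ • q) := by
  rw [cocycle_mul]
  rfl

@[simp]
lemma cocycle_one : cocycle q₀ f 1 = 1 := by simp [cocycle]

lemma cocycle_inv_apply (g : FreeGroup α) (q : Q) :
    cocycle q₀ f g⁻¹ q = (cocycle q₀ f g (g • q))⁻¹ := by
  have := cocycle_mul_apply q₀ f g g⁻¹ (g • q)
  rw [mul_inv_cancel, cocycle_one, inv_smul_smul] at this
  exact eq_inv_of_mul_eq_one_right this.symm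

open scoped Classical in
lemma cocycle_of (i : α) : cocycle q₀ f (of i) = Pi.mulSingle q₀ (f (of i)) := by
  simp [cocycle, cocycleLift]

lemma prod_cocycle [Fintype Q] (g : FreeGroup α) : ∏ q, cocycle q₀ f g q = f g := by
  let prodLeft : (Q → A) ⋊[MulDistribMulAction.toMulAut (FreeGroup α) (Q → A)] FreeGroup α →* A :=
    { toFun x := ∏ q, x.left q
      map_one' := by simp
      map_mul' x y := by
        simp only [SemidirectProduct.mul_left, Pi.mul_apply, Finset.prod_mul_distrib]
        congr 1
        exact Equiv.prod_comp (toPerm x.right⁻¹) y.left }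
  change prodLeft.comp (cocycleLift q₀ f) g = f g
  congr 1
  ext i
  classical
  simp [prodLeft, ← cocycle.eq_def, cocycle_of]

section Transfer

variable {H : Subgroup (FreeGroup α)} (f : FreeGroup α →* A)

variable (H) in
noncomputable def transferPreimage : H →* A where
  toFun h :=
    cocycle ((1 : FreeGroup α) : FreeGroup α ⧸ H) f h ((1 : FreeGroup α) : FreeGroup α ⧸ H)
  map_one' := by simp
  map_mul' h₁ h₂ := by
    have : (h₁⁻¹ : FreeGroup α) • ((1 : FreeGroup α) : FreeGroup α ⧸ H) = (1 : FreeGroup α) :=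
      mem_stabilizer_iff.mp (by simp)
    rw [Subgroup.coe_mul, cocycle_mul_apply, this]

lemma transferPreimage_apply_inv_mul {s t : FreeGroup α} (h : s⁻¹ * t ∈ H) :
    transferPreimage H f ⟨s⁻¹ * t, h⟩ =
      (cocycle ((1 : FreeGroup α) : FreeGroup α ⧸ H) f s s)⁻¹ *
        cocycle ((1 : FreeGroup α) : FreeGroup α ⧸ H) f t s := by
  change cocycle _ f (s⁻¹ * t) _ = _
  rw [cocycle_mul_apply, cocycle_inv_apply, inv_inv, Quotient.smul_mk, smul_eq_mul, mul_one]

variable [H.FiniteIndex]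

open Subgroup.leftTransversals

variable (H) in
noncomputable def transversalWeight (T : H.LeftTransversal) : A :=
  letI := H.fintypeQuotientOfFiniteIndex
  ∏ q, cocycle ((1 : FreeGroup α) : FreeGroup α ⧸ H) f (T.2.leftQuotientEquiv q) q

lemma diff_transferPreimage (S T : H.LeftTransversal) :
    diff (transferPreimage H f) S T = (transversalWeight H f S)⁻¹ * transversalWeight H f T := by
  let := H.fintypeQuotientOfFiniteIndex
  rw [diff, transversalWeight, transversalWeight, ← Finset.prod_inv_distrib,
    ← Finset.prod_mul_distrib]
  refine Finset.prod_congr rfl fun q _ => ?_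
  rw [transferPreimage_apply_inv_mul]
  simp only [QuotientGroup.mk, S.2.quotientGroupMk_leftQuotientEquiv]

lemma transversalWeight_smul (g : FreeGroup α) (T : H.LeftTransversal) :
    transversalWeight H f (g • T) = f g * transversalWeight H f T := by
  let := H.fintypeQuotientOfFiniteIndex
  simp only [transversalWeight, Subgroup.smul_apply_eq_smul_apply_inv_smul, smul_eq_mul,
    cocycle_mul_apply, Finset.prod_mul_distrib, prod_cocycle]
  congr 1
  exact Equiv.prod_comp (toPerm g⁻¹)
    fun q => cocycle ((1 : FreeGroup α) : FreeGroup α ⧸ H) f (T.2.leftQuotientEquiv q) q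

theorem transfer_transferPreimage : (transferPreimage H f).transfer = f := by
  refine MonoidHom.ext fun g => ?_
  rw [MonoidHom.transfer_def _ default, diff_transferPreimage, transversalWeight_smul,
    inv_mul_cancel_comm_assoc]

end Transfer

end FreeGroup

lemma MonoidHom.comp_transfer {G A B : Type*} [Group G] [CommGroup A] [CommGroup B]
    {H : Subgroup G} [H.FiniteIndex] (ψ : A →* B) (ϕ : H →* A) :
    ψ.comp ϕ.transfer = (ψ.comp ϕ).transfer := by
  ext g
  simp [MonoidHom.transfer_def _ default, Subgroup.leftTransversals.diff, map_prod]

theorem transfer_visible_general {n : ℕ} (H : Subgroup (FreeGroup (Fin n)))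
    [H.FiniteIndex] (w : FreeGroup (Fin n)) (hw : IsVisibleElement w) :
    IsVisibleElement ((MonoidHom.transfer (Abelianization.of : H →* Abelianization H)) w) := by
  obtain ⟨f, hf⟩ := hw
  refine ⟨Abelianization.lift (FreeGroup.transferPreimage H f), ?_⟩
  rw [← MonoidHom.comp_apply, MonoidHom.comp_transfer, ← Abelianization.lift_symm_apply,
    Equiv.symm_apply_apply, FreeGroup.transfer_transferPreimage, hf]

theorem transfer_visible {n : ℕ} (hn : 2 ≤ n) (H : Subgroup (FreeGroup (Fin n)))
    [H.FiniteIndex] (w : FreeGroup (Fin n)) (hw : IsVisibleElement w) :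
    IsVisibleElement ((MonoidHom.transfer (Abelianization.of : H →* Abelianization H)) w) :=
  transfer_visible_general H w hw
end

section
/- Let F_2 be free on x, y and let K = ⟨x, yxy⁻², y²xy⁻¹⟩ ≤ F_2. Then w = x[x,y] satisfies: w is a visible element of F_2, w ∉ K, w² ∈ K, and w² equals x²[t₂⁻¹, t₁] where t₁ = yxy⁻², t₂ = y²xy⁻¹; in particular w² is not a visible element of K, and ⟨w⟩ ∩ K = ⟨w²⟩ is not a retract of K. -/
namespace BergmanExample

open scoped commutatorElement

def x : FreeGroup (Fin 2) := FreeGroup.of 0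
def y : FreeGroup (Fin 2) := FreeGroup.of 1
def t₁ : FreeGroup (Fin 2) := y * x * y⁻¹ * y⁻¹
def t₂ : FreeGroup (Fin 2) := y * y * x * y⁻¹
def K : Subgroup (FreeGroup (Fin 2)) := Subgroup.closure {x, t₁, t₂}
def w : FreeGroup (Fin 2) := x * ⁅x, y⁆

end BergmanExample

section

variable {G : Type*} [Group G]

theorem Subgroup.zpowers_subgroupOf {H : Subgroup G} (a : H) :
    (Subgroup.zpowers (a : G)).subgroupOf H = Subgroup.zpowers a := by
  ext b
  simp only [Subgroup.mem_subgroupOf, Subgroup.mem_zpowers_iff, Subtype.ext_iff,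
    Subgroup.coe_zpow]

theorem Subgroup.zpowers_inf_eq_zpowers_sq {H : Subgroup G} {g : G} (hg : g ∉ H)
    (hg2 : g ^ 2 ∈ H) : Subgroup.zpowers g ⊓ H = Subgroup.zpowers (g ^ 2) := by
  refine le_antisymm ?_ (le_inf (Subgroup.zpowers_le.mpr (pow_mem (Subgroup.mem_zpowers g) 2))
    (Subgroup.zpowers_le.mpr hg2))
  rintro _ ⟨⟨k, rfl⟩, hk⟩
  obtain ⟨m, rfl | rfl⟩ := Int.even_or_odd' k
  · exact ⟨m, by group⟩
  · refine absurd ?_ hg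
    have : g = g ^ (2 * m + 1) * (g ^ 2) ^ (-m) := by group
    rw [this]
    exact mul_mem hk (zpow_mem hg2 _)

open scoped commutatorElement in
theorem not_isVisibleElement_sq_mul_commutator (a b c : G) :
    ¬ IsVisibleElement (a ^ 2 * ⁅b, c⁆) := by
  rintro ⟨f, hf⟩
  rw [map_mul, map_pow, map_commutatorElement, commutatorElement_eq_one_iff_mul_comm.mpr
    (mul_comm _ _), mul_one] at hf
  have := congrArg Multiplicative.toAdd hf
  simp only [toAdd_pow, toAdd_ofAdd, nsmul_eq_mul] at this
  omega

theorem IsVisibleElement.of_isRetract_zpowers {g : G} (hg : ¬ IsOfFinOrder g)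
    (hR : IsRetract (Subgroup.zpowers g)) : IsVisibleElement g := by
  obtain ⟨r, hrange, hid⟩ := hR
  let e : Multiplicative ℤ ≃* (zpowersHom G g).range :=
    MonoidHom.ofInjective (injective_zpow_iff_not_isOfFinOrder.mpr hg)
  have hr : ∀ a, r a ∈ (zpowersHom G g).range := fun a ↦ by
    rw [Subgroup.range_zpowersHom, ← hrange]
    exact ⟨a, rfl⟩
  refine ⟨e.symm.toMonoidHom.comp (r.codRestrict _ hr), ?_⟩
  rw [MonoidHom.comp_apply, MulEquiv.coe_toMonoidHom, MulEquiv.symm_apply_eq]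
  ext
  change r g = zpowersHom G g (Multiplicative.ofAdd 1)
  simp [hid g (Subgroup.mem_zpowers g)]

end

namespace BergmanExample

open scoped commutatorElement

theorem w_sq_eq : w ^ 2 = x ^ 2 * ⁅t₂⁻¹, t₁⁆ := by
  simp only [w, t₁, t₂, commutatorElement_def, pow_two]
  group

theorem x_mem_K : x ∈ K := Subgroup.subset_closure (by simp)

theorem t₁_mem_K : t₁ ∈ K := Subgroup.subset_closure (by simp)

theorem t₂_mem_K : t₂ ∈ K := Subgroup.subset_closure (by simp)

theorem w_sq_eq_coe :
    w ^ 2 = ((⟨x, x_mem_K⟩ ^ 2 * ⁅(⟨t₂, t₂_mem_K⟩ : K)⁻¹, ⟨t₁, t₁_mem_K⟩⁆ : K) :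
      FreeGroup (Fin 2)) :=
  w_sq_eq

theorem w_sq_mem_K : w ^ 2 ∈ K := w_sq_eq_coe ▸ Subtype.prop _

theorem isVisibleElement_w : IsVisibleElement w :=
  ⟨FreeGroup.lift ![Multiplicative.ofAdd 1, 1], by decide⟩

-- The action of `F₂` on the three cosets of `K`, with `0` standing for `K` itself.
def cosetAction : FreeGroup (Fin 2) →* Equiv.Perm (Fin 3) :=
  FreeGroup.lift ![Equiv.swap 1 2, finRotate 3]

theorem K_le_stabilizer :
    K ≤ (MulAction.stabilizer (Equiv.Perm (Fin 3)) (0 : Fin 3)).comap cosetAction :=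
  Subgroup.closure_le _ |>.mpr <| by
    simp only [Set.insert_subset_iff, Set.singleton_subset_iff, SetLike.mem_coe,
      Subgroup.mem_comap, MulAction.mem_stabilizer_iff]
    decide

theorem w_not_mem_K : w ∉ K := fun h ↦
  absurd (MulAction.mem_stabilizer_iff.mp (K_le_stabilizer h)) (by decide)

theorem mk_w_sq_eq (h : w ^ 2 ∈ K) :
    (⟨w ^ 2, h⟩ : K) = ⟨x, x_mem_K⟩ ^ 2 * ⁅(⟨t₂, t₂_mem_K⟩ : K)⁻¹, ⟨t₁, t₁_mem_K⟩⁆ :=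
  Subtype.ext w_sq_eq_coe

theorem not_isVisibleElement_mk_w_sq (h : w ^ 2 ∈ K) : ¬ IsVisibleElement (⟨w ^ 2, h⟩ : K) :=
  mk_w_sq_eq h ▸ not_isVisibleElement_sq_mul_commutator _ _ _

theorem not_isOfFinOrder_mk_w_sq : ¬ IsOfFinOrder (⟨w ^ 2, w_sq_mem_K⟩ : K) := by
  refine not_isOfFinOrder_of_isMulTorsionFree fun h ↦ w_not_mem_K ?_
  have hw : w ^ 2 = 1 := congrArg Subtype.val h
  rw [sq_eq_one.mp hw]
  exact K.one_mem

theorem not_isRetract_zpowers_w_sq : ¬ IsRetract ((Subgroup.zpowers (w ^ 2)).subgroupOf K) :=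
  fun hR ↦ not_isVisibleElement_mk_w_sq w_sq_mem_K <| .of_isRetract_zpowers
    not_isOfFinOrder_mk_w_sq (Subgroup.zpowers_subgroupOf (⟨w ^ 2, w_sq_mem_K⟩ : K) ▸ hR)

theorem bergman_counterexample :
    IsVisibleElement w ∧ w ∉ K ∧ w ^ 2 ∈ K ∧ w ^ 2 = x ^ 2 * ⁅t₂⁻¹, t₁⁆ ∧
      (∀ h : w ^ 2 ∈ K, ¬ IsVisibleElement (⟨w ^ 2, h⟩ : K)) ∧
      Subgroup.zpowers w ⊓ K = Subgroup.zpowers (w ^ 2) ∧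
      ¬ IsRetract ((Subgroup.zpowers (w ^ 2)).subgroupOf K) :=
  ⟨isVisibleElement_w, w_not_mem_K, w_sq_mem_K, w_sq_eq, not_isVisibleElement_mk_w_sq,
    Subgroup.zpowers_inf_eq_zpowers_sq w_not_mem_K w_sq_mem_K, not_isRetract_zpowers_w_sq⟩

end BergmanExample
end
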